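/- arXiv:1909.08893 — 3 statements merged into one kernel-verified Lean document; each statement's English description precedes it below -/
import Mathlib

section
/- Let B be the infinite lower-triangular integer matrix with entries B_{ij} = i!/(i−j)! for i ≥ j and 0 otherwise (i,j ≥ 0). For any index sets I = {i_1 < … < i_p} and J = {j_1 < … < j_p} of natural numbers with j_k ≤ i_k for all k, the p×p submatrix B(I,J) with entries B_{i_k j_l} has strictly positive determinant. -/
/-!
Since `n.descFactorial m = n.descFactorial c * (n - c).descFactorial (m - c)`, factoring
`(i k).descFactorial (j 0)` out of row `k` reduces to the case `j 0 = 0`, where the first column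
consists of ones. Subtracting from each row the previous one and expanding along that column leaves
the entries
`b.descFactorial (m + 1) - a.descFactorial (m + 1) = (m + 1) * ∑ t ∈ Ico a b, t.descFactorial m`,
so by multilinearity in the rows the minor is a positive multiple of a sum of smaller minors of the
same kind, whose row indices `r` interlace `i`. By induction on the size, every such minor with
strictly increasing indices is nonnegative, and the summand with each `r k` maximal is positive
when `j ≤ i`.
-/

open Finset Matrix

theorem Nat.succ_mul_sum_range_descFactorial (m n : ℕ) :
    (m + 1) * ∑ t ∈ range n, t.descFactorial m = n.descFactorial (m + 1) := by
  induction n with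
  | zero => simp
  | succ n ih =>
    rw [sum_range_succ, mul_add, ih, Nat.succ_descFactorial_succ, Nat.descFactorial_succ]
    rcases le_or_gt m n with h | h
    · rw [← Nat.add_mul]; congr 1; omega
    · simp [Nat.descFactorial_eq_zero_iff_lt.mpr h]

theorem Nat.cast_descFactorial_sub_eq_sum_Ico {R : Type*} [CommRing R] {a b : ℕ} (h : a ≤ b)
    (m : ℕ) :
    (b.descFactorial (m + 1) : R) - a.descFactorial (m + 1)
      = (m + 1) * ∑ t ∈ Ico a b, (t.descFactorial m : R) := by
  rw [sum_Ico_eq_sub _ h, mul_sub, ← Nat.succ_mul_sum_range_descFactorial,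
    ← Nat.succ_mul_sum_range_descFactorial]
  push_cast
  ring

theorem StrictMono.tsub_const {ι : Type*} [Preorder ι] {f : ι → ℕ} (hf : StrictMono f) {c : ℕ}
    (hc : ∀ k, c ≤ f k) : StrictMono fun k => f k - c := fun a b hab => by
  show f a - c < f b - c
  have := hf hab; have := hc a; omega

theorem strictMono_of_mem_piFinset_Ico {p : ℕ} {i : Fin (p + 1) → ℕ} (hi : Monotone i)
    {r : Fin p → ℕ}
    (hr : r ∈ Fintype.piFinset fun k : Fin p => Ico (i k.castSucc) (i k.succ)) :
    StrictMono r := by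
  simp only [Fintype.mem_piFinset, mem_Ico] at hr
  intro a b hab
  calc r a < i a.succ := (hr a).2
    _ ≤ i b.castSucc := hi (Fin.succ_le_castSucc_iff.mpr hab)
    _ ≤ r b := (hr b).1

namespace Matrix

variable {R : Type*} [CommRing R]

theorem det_of_sum_finset {n α : Type*} [Fintype n] [DecidableEq n] (s : n → Finset α)
    (g : n → α → n → R) :
    (of fun k l => ∑ t ∈ s k, g k t l).det
      = ∑ r ∈ Fintype.piFinset s, (of fun k l => g k (r k) l).det := by
  have hrows : (of fun k l => ∑ t ∈ s k, g k t l) = fun k => ∑ t ∈ s k, g k t := by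
    ext k l
    simp
  rw [hrows]
  exact detRowAlternating.map_sum_finset g s

theorem det_eq_det_succ_sub_castSucc {p : ℕ} (A : Matrix (Fin (p + 1)) (Fin (p + 1)) R)
    (hA : ∀ k, A k 0 = 1) :
    A.det = (of fun k l : Fin p => A k.succ l.succ - A k.castSucc l.succ).det := by
  set B : Matrix (Fin (p + 1)) (Fin (p + 1)) R :=
    of fun k l => Fin.cases (A 0 l) (fun k => A k.succ l - A k.castSucc l) k
  have hAB : A.det = B.det :=
    det_eq_of_forall_row_eq_smul_add_pred (fun _ => 1) (fun _ => rfl) (fun _ _ => by simp [B])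
  rw [hAB, det_succ_column_zero, Fin.sum_univ_succ, sum_eq_zero fun k _ => by simp [B, hA]]
  simp [B, hA, submatrix]

end Matrix

section descFactorialMatrix

variable (R : Type*) [CommRing R] {m n : Type*}

def descFactorialMatrix (i : m → ℕ) (j : n → ℕ) : Matrix m n R :=
  of fun k l => ((i k).descFactorial (j l) : R)

variable {R}

theorem det_descFactorialMatrix_eq_prod_mul_det_sub [Fintype n] [DecidableEq n] (i j : n → ℕ)
    {c : ℕ} (hc : ∀ l, c ≤ j l) :
    (descFactorialMatrix R i j).det
      = (∏ k, ((i k).descFactorial c : R))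
        * (descFactorialMatrix R (fun k => i k - c) (fun l => j l - c)).det := by
  rw [← det_mul_column]
  congr 1
  ext k l
  simp only [descFactorialMatrix, of_apply]
  rw [← Nat.cast_mul, mul_comm, Nat.descFactorial_mul_descFactorial (hc l)]

theorem det_descFactorialMatrix_eq_prod_mul_sum_of_eq_zero {p : ℕ} (i j : Fin (p + 1) → ℕ)
    (hi : Monotone i) (hj : StrictMono j) (hj0 : j 0 = 0) :
    (descFactorialMatrix R i j).det
      = (∏ l : Fin p, (j l.succ : R))
        * ∑ r ∈ Fintype.piFinset fun k : Fin p => Ico (i k.castSucc) (i k.succ),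
            (descFactorialMatrix R r fun l : Fin p => j l.succ - 1).det := by
  have hentries : (of fun k l : Fin p =>
      descFactorialMatrix R i j k.succ l.succ - descFactorialMatrix R i j k.castSucc l.succ)
      = of fun k l => (j l.succ : R) * (of fun k l => ∑ t ∈ Ico (i k.castSucc) (i k.succ),
          (t.descFactorial (j l.succ - 1) : R)) k l := by
    ext k l
    have hjl : j l.succ = j l.succ - 1 + 1 := by have := hj (Fin.succ_pos l); omega
    simp only [descFactorialMatrix, of_apply]
    rw [hjl, Nat.cast_descFactorial_sub_eq_sum_Ico (hi Fin.castSucc_lt_succ.le),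
      Nat.add_sub_cancel, Nat.cast_succ]
  rw [det_eq_det_succ_sub_castSucc _ (fun k => by simp [descFactorialMatrix, hj0]), hentries,
    det_mul_row, det_of_sum_finset]
  rfl

theorem det_descFactorialMatrix_eq_prod_mul_sum {p : ℕ} {i j : Fin (p + 1) → ℕ}
    (hi : StrictMono i) (hj : StrictMono j) :
    (descFactorialMatrix R i j).det
      = (∏ k, ((i k).descFactorial (j 0) : R)) * ((∏ l : Fin p, ((j l.succ - j 0 : ℕ) : R))
        * ∑ r ∈ Fintype.piFinset fun k : Fin p => Ico (i k.castSucc - j 0) (i k.succ - j 0),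
            (descFactorialMatrix R r fun l : Fin p => j l.succ - (j 0 + 1)).det) := by
  have hj0 : ∀ l, j 0 ≤ j l := fun l => hj.monotone (Fin.zero_le l)
  rw [det_descFactorialMatrix_eq_prod_mul_det_sub i j hj0,
    det_descFactorialMatrix_eq_prod_mul_sum_of_eq_zero _ _
      (fun _ _ h => Nat.sub_le_sub_right (hi.monotone h) _) (hj.tsub_const hj0) (Nat.sub_self _)]
  simp only [Nat.sub_sub]

variable [PartialOrder R] [IsStrictOrderedRing R]

theorem det_descFactorialMatrix_nonneg {p : ℕ} {i j : Fin p → ℕ} (hi : StrictMono i)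
    (hj : StrictMono j) : 0 ≤ (descFactorialMatrix R i j).det := by
  induction p with
  | zero => simp
  | succ p ih =>
    rcases lt_or_ge (i 0) (j 0) with h | h
    · refine (det_eq_zero_of_row_eq_zero 0 fun l => ?_).ge
      simp [descFactorialMatrix, Nat.descFactorial_eq_zero_iff_lt.mpr
        (h.trans_le (hj.monotone (Fin.zero_le l)))]
    · rw [det_descFactorialMatrix_eq_prod_mul_sum hi hj]
      refine mul_nonneg (prod_nonneg fun _ _ => Nat.cast_nonneg _)
        (mul_nonneg (prod_nonneg fun _ _ => Nat.cast_nonneg _) (sum_nonneg fun r hr => ?_))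
      exact ih
        (strictMono_of_mem_piFinset_Ico (fun _ _ h => Nat.sub_le_sub_right (hi.monotone h) _) hr)
        ((hj.comp Fin.strictMono_succ).tsub_const fun l => hj (Fin.succ_pos l))

theorem det_descFactorialMatrix_pos {p : ℕ} {i j : Fin p → ℕ} (hi : StrictMono i)
    (hj : StrictMono j) (hji : ∀ k, j k ≤ i k) : 0 < (descFactorialMatrix R i j).det := by
  induction p with
  | zero => simp
  | succ p ih =>
    have hi0 : ∀ k, j 0 < i (Fin.succ k) := fun k => (hji 0).trans_lt (hi (Fin.succ_pos k))
    have hr₀ : (fun k => i k.succ - (j 0 + 1))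
        ∈ Fintype.piFinset fun k : Fin p => Ico (i k.castSucc - j 0) (i k.succ - j 0) := by
      simp only [Fintype.mem_piFinset, mem_Ico]
      intro k
      have := hi (Fin.castSucc_lt_succ (i := k)); have := hi0 k; omega
    rw [det_descFactorialMatrix_eq_prod_mul_sum hi hj]
    refine mul_pos (prod_pos fun k _ => ?_) (mul_pos (prod_pos fun l _ => ?_) ?_)
    · exact Nat.cast_pos.mpr
        (Nat.descFactorial_pos.mpr ((hji 0).trans (hi.monotone (Fin.zero_le k))))
    · exact Nat.cast_pos.mpr (Nat.sub_pos_of_lt (hj (Fin.succ_pos l)))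
    have hj' : StrictMono fun l : Fin p => j l.succ - (j 0 + 1) :=
      (hj.comp Fin.strictMono_succ).tsub_const fun l => hj (Fin.succ_pos l)
    refine sum_pos' (fun r hr => det_descFactorialMatrix_nonneg ?_ hj') ⟨_, hr₀, ih ?_ hj' ?_⟩
    · exact strictMono_of_mem_piFinset_Ico (fun _ _ h => Nat.sub_le_sub_right (hi.monotone h) _) hr
    · exact (hi.comp Fin.strictMono_succ).tsub_const hi0
    · exact fun l => Nat.sub_le_sub_right (hji l.succ) _

end descFactorialMatrix

theorem descFactorial_submatrix_det_pos
    (p : ℕ) (i j : Fin p → ℕ)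
    (hi : StrictMono i) (hj : StrictMono j)
    (hle : ∀ k, j k ≤ i k) :
    0 < (Matrix.of fun k l : Fin p => ((i k).descFactorial (j l) : ℝ)).det :=
  det_descFactorialMatrix_pos hi hj hle
end

section
/- Let A be the infinite binomial matrix with A_{ij} = C(i,j) for i ≥ j and 0 otherwise. For any index sets I = {i_1 < … < i_p} and J = {j_1 < … < j_p} of naturals with j_k ≤ i_k for all k, the submatrix A(I,J) has strictly positive determinant. -/
open Matrix Finset

private lemma pascal_cast (n m : ℕ) (hn : 1 ≤ n) :
    ((n.choose m : ℝ)) =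
      (if m = 0 then (0:ℝ) else ((n - 1).choose (m - 1) : ℝ)) + ((n - 1).choose m : ℝ) := by
  obtain ⟨n, rfl⟩ : ∃ n', n = n' + 1 := ⟨n - 1, by omega⟩
  cases m with
  | zero => simp
  | succ m =>
      simp only [Nat.succ_sub_one, if_neg (Nat.succ_ne_zero m)]
      rw [Nat.choose_succ_succ']
      push_cast
      ring

/-- Pascal-rule column decomposition of the determinant. -/
private lemma det_decomp (p : ℕ) (i j : Fin p → ℕ) (hi1 : ∀ k, 1 ≤ i k) :
    (Matrix.of fun k l : Fin p => ((i k).choose (j l) : ℝ)).det =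
      ∑ r : Fin p → Bool,
        (Matrix.of fun l k : Fin p =>
            if r l then (if j l = 0 then (0:ℝ) else ((i k - 1).choose (j l - 1) : ℝ))
            else ((i k - 1).choose (j l) : ℝ)).det := by
  rw [← Matrix.det_transpose]
  set g : Fin p → Bool → (Fin p → ℝ) := fun l ε k =>
    if ε then (if j l = 0 then (0:ℝ) else ((i k - 1).choose (j l - 1) : ℝ))
    else ((i k - 1).choose (j l) : ℝ) with hg
  have h1 : (Matrix.of fun k l : Fin p => ((i k).choose (j l) : ℝ)).transpose
      = Matrix.of fun l k => ∑ ε : Bool, g l ε k := by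
    ext l k
    simp only [Matrix.transpose_apply, Matrix.of_apply, Fintype.sum_bool, hg]
    rw [pascal_cast (i k) (j l) (hi1 k)]
    simp
  rw [h1]
  have h2 := (Matrix.detRowAlternating :
      ((Fin p → ℝ) [⋀^Fin p]→ₗ[ℝ] ℝ)).toMultilinearMap.map_sum (g := g)
  simp only [AlternatingMap.coe_multilinearMap] at h2
  have h4 : (fun l : Fin p => ∑ ε : Bool, g l ε)
      = fun l k => ∑ ε : Bool, g l ε k := by
    funext l; exact funext fun k => Finset.sum_apply k _ _
  calc (Matrix.of fun l k => ∑ ε : Bool, g l ε k).det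
      = Matrix.detRowAlternating (fun l : Fin p => ∑ ε : Bool, g l ε) := by
        rw [h4]; rfl
    _ = ∑ r : Fin p → Bool, Matrix.detRowAlternating (fun l => g l (r l)) := h2
    _ = _ := rfl

/-- If for some `l`, `r l = true` and `j l = 0`, the term vanishes. -/
private lemma term_zero_col (p : ℕ) (i j : Fin p → ℕ) (r : Fin p → Bool)
    (l : Fin p) (hrl : r l = true) (hjl : j l = 0) :
    (Matrix.of fun l k : Fin p =>
        if r l then (if j l = 0 then (0:ℝ) else ((i k - 1).choose (j l - 1) : ℝ))
        else ((i k - 1).choose (j l) : ℝ)).det = 0 := by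
  apply Matrix.det_eq_zero_of_row_eq_zero l
  intro k
  simp [hrl, hjl]

/-- When no such degenerate column exists, the term is (the transpose of) a binomial matrix. -/
private lemma term_eq (p : ℕ) (i j : Fin p → ℕ) (r : Fin p → Bool)
    (hex : ∀ l, r l = true → j l ≠ 0) :
    (Matrix.of fun l k : Fin p =>
        if r l then (if j l = 0 then (0:ℝ) else ((i k - 1).choose (j l - 1) : ℝ))
        else ((i k - 1).choose (j l) : ℝ)).det =
    (Matrix.of fun k l : Fin p =>
        ((i k - 1).choose (j l - (if r l then 1 else 0)) : ℝ)).det := by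
  rw [← Matrix.det_transpose (Matrix.of fun k l : Fin p =>
        ((i k - 1).choose (j l - (if r l then 1 else 0)) : ℝ))]
  congr 1
  ext l k
  simp only [Matrix.transpose_apply, Matrix.of_apply]
  cases hr : r l with
  | true => simp [if_neg (hex l hr)]
  | false => simp

private lemma jprime_monotone (p : ℕ) (j : Fin p → ℕ) (hj : StrictMono j) (r : Fin p → Bool)
    {a b : Fin p} (hab : a ≤ b) :
    j a - (if r a then 1 else 0) ≤ j b - (if r b then 1 else 0) := by
  rcases eq_or_lt_of_le hab with h | h
  · subst h; exact le_rfl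
  · have := hj h
    split <;> split <;> omega

/-- If the new column indices are not strictly monotone, the term vanishes. -/
private lemma term_degenerate (p : ℕ) (i j : Fin p → ℕ) (hj : StrictMono j) (r : Fin p → Bool)
    (hsm : ¬ StrictMono (fun l => j l - (if r l then 1 else 0))) :
    (Matrix.of fun k l : Fin p =>
        ((i k - 1).choose (j l - (if r l then 1 else 0)) : ℝ)).det = 0 := by
  unfold StrictMono at hsm
  push_neg at hsm
  obtain ⟨a, b, hab, hba⟩ := hsm
  have heq : j a - (if r a then 1 else 0) = j b - (if r b then 1 else 0) :=
    le_antisymm (jprime_monotone p j hj r hab.le) hba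
  apply Matrix.det_zero_of_column_eq (ne_of_lt hab)
  intro k
  simp [heq]

private lemma sum_pred (p : ℕ) (i : Fin p → ℕ) (hi1 : ∀ k, 1 ≤ i k) :
    (∑ k, (i k - 1)) + p = ∑ k, i k := by
  calc (∑ k, (i k - 1)) + p = ∑ k : Fin p, ((i k - 1) + 1) := by
        rw [Finset.sum_add_distrib, Finset.sum_const, Finset.card_univ, Fintype.card_fin,
          smul_eq_mul, mul_one]
    _ = ∑ k, i k := Finset.sum_congr rfl fun k _ => Nat.sub_add_cancel (hi1 k)

/-- Main nonnegativity lemma, by strong induction on `∑ i + p`. -/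
private lemma binom_det_nonneg (N : ℕ) : ∀ p (i j : Fin p → ℕ), (∑ k, i k) + p ≤ N →
    StrictMono i → StrictMono j →
    0 ≤ (Matrix.of fun k l : Fin p => ((i k).choose (j l) : ℝ)).det := by
  induction N using Nat.strong_induction_on with
  | _ N IH =>
  intro p i j hN hi hj
  match p with
  | 0 => simp
  | p + 1 =>
    by_cases hi0 : i 0 = 0
    · by_cases hj0 : j 0 = 0
      · -- expand along row 0, which is e₀
        set M := Matrix.of fun k l : Fin (p+1) => ((i k).choose (j l) : ℝ) with hM
        have hrow : ∀ l : Fin (p+1), M 0 l = if l = 0 then 1 else 0 := by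
          intro l
          by_cases hl : l = 0
          · subst hl; simp [hM, hi0, hj0]
          · have hjl : i 0 < j l := by
              have h0l : (0 : Fin (p+1)) < l := Fin.pos_of_ne_zero hl
              have := hj h0l; omega
            simp [hM, Nat.choose_eq_zero_of_lt hjl, hl]
        rw [Matrix.det_succ_row_zero, Finset.sum_eq_single 0]
        · have hsub : M.submatrix Fin.succ (Fin.succAbove 0)
              = Matrix.of fun k l : Fin p => ((i k.succ).choose (j l.succ) : ℝ) := by
            ext k l
            simp [hM, Fin.succAbove_zero]
          rw [hsub, hrow 0, if_pos rfl]
          simp only [Fin.val_zero, pow_zero, one_mul]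
          refine IH ((∑ k : Fin p, i k.succ) + p) ?_ p _ _ le_rfl
            (hi.comp Fin.strictMono_succ) (hj.comp Fin.strictMono_succ)
          have hsum : ∑ k : Fin (p+1), i k = i 0 + ∑ k : Fin p, i k.succ := Fin.sum_univ_succ i
          omega
        · intro l _ hl
          rw [hrow l, if_neg hl]; ring
        · intro h; exact absurd (Finset.mem_univ 0) h
      · have h0 : (Matrix.of fun k l : Fin (p+1) => ((i k).choose (j l) : ℝ)).det = 0 := by
          apply Matrix.det_eq_zero_of_row_eq_zero 0
          intro l
          have hjl : i 0 < j l := by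
            have := hj.monotone (Fin.zero_le l); omega
          simp [Nat.choose_eq_zero_of_lt hjl]
        rw [h0]
    · have hi1 : ∀ k, 1 ≤ i k := by
        intro k
        have := hi.monotone (Fin.zero_le k); omega
      rw [det_decomp _ _ _ hi1]
      apply Finset.sum_nonneg
      intro r _
      by_cases hex : ∃ l, r l = true ∧ j l = 0
      · obtain ⟨l, hrl, hjl⟩ := hex
        rw [term_zero_col (p+1) i j r l hrl hjl]
      · have hex' : ∀ l, r l = true → j l ≠ 0 := fun l hl hj0 => hex ⟨l, hl, hj0⟩
        rw [term_eq (p+1) i j r hex']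
        by_cases hsm : StrictMono (fun l => j l - (if r l then 1 else 0))
        · have hi' : StrictMono (fun k : Fin (p+1) => i k - 1) := by
            intro a b hab
            have := hi hab; have := hi1 a
            simp only; omega
          have hsum := sum_pred (p+1) i hi1
          exact IH ((∑ k, (i k - 1)) + (p+1)) (by omega) (p+1) _ _ le_rfl hi' hsm
        · rw [term_degenerate (p+1) i j hj r hsm]

/-- a single term of the decomposition is nonnegative. -/
private lemma term_nonneg (p : ℕ) (i j : Fin p → ℕ) (hi : StrictMono i) (hj : StrictMono j)
    (hi1 : ∀ k, 1 ≤ i k) (r : Fin p → Bool) :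
    0 ≤ (Matrix.of fun l k : Fin p =>
        if r l then (if j l = 0 then (0:ℝ) else ((i k - 1).choose (j l - 1) : ℝ))
        else ((i k - 1).choose (j l) : ℝ)).det := by
  by_cases hex : ∃ l, r l = true ∧ j l = 0
  · obtain ⟨l, hrl, hjl⟩ := hex
    rw [term_zero_col p i j r l hrl hjl]
  · have hex' : ∀ l, r l = true → j l ≠ 0 := fun l hl hj0 => hex ⟨l, hl, hj0⟩
    rw [term_eq p i j r hex']
    by_cases hsm : StrictMono (fun l => j l - (if r l then 1 else 0))
    · refine binom_det_nonneg ((∑ k, (i k - 1)) + p) p _ _ le_rfl ?_ hsm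
      intro a b hab
      have := hi hab; have := hi1 a
      simp only; omega
    · rw [term_degenerate p i j hj r hsm]

/-- Main positivity lemma, by strong induction on `∑ i + p`. -/
private lemma binom_det_pos (N : ℕ) : ∀ p (i j : Fin p → ℕ), (∑ k, i k) + p ≤ N →
    StrictMono i → StrictMono j → (∀ k, j k ≤ i k) →
    0 < (Matrix.of fun k l : Fin p => ((i k).choose (j l) : ℝ)).det := by
  induction N using Nat.strong_induction_on with
  | _ N IH =>
  intro p i j hN hi hj hle
  match p with
  | 0 => simp
  | p + 1 =>
    by_cases hi0 : i 0 = 0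
    · have hj0 : j 0 = 0 := by have := hle 0; omega
      set M := Matrix.of fun k l : Fin (p+1) => ((i k).choose (j l) : ℝ) with hM
      have hrow : ∀ l : Fin (p+1), M 0 l = if l = 0 then 1 else 0 := by
        intro l
        by_cases hl : l = 0
        · subst hl; simp [hM, hi0, hj0]
        · have hjl : i 0 < j l := by
            have h0l : (0 : Fin (p+1)) < l := Fin.pos_of_ne_zero hl
            have := hj h0l; omega
          simp [hM, Nat.choose_eq_zero_of_lt hjl, hl]
      rw [Matrix.det_succ_row_zero, Finset.sum_eq_single 0]
      · have hsub : M.submatrix Fin.succ (Fin.succAbove 0)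
            = Matrix.of fun k l : Fin p => ((i k.succ).choose (j l.succ) : ℝ) := by
          ext k l
          simp [hM, Fin.succAbove_zero]
        rw [hsub, hrow 0, if_pos rfl]
        simp only [Fin.val_zero, pow_zero, one_mul]
        refine IH ((∑ k : Fin p, i k.succ) + p) ?_ p _ _ le_rfl
          (hi.comp Fin.strictMono_succ) (hj.comp Fin.strictMono_succ)
          (fun k => hle k.succ)
        have hsum : ∑ k : Fin (p+1), i k = i 0 + ∑ k : Fin p, i k.succ := Fin.sum_univ_succ i
        omega
      · intro l _ hl
        rw [hrow l, if_neg hl]; ring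
      · intro h; exact absurd (Finset.mem_univ 0) h
    · have hi1 : ∀ k, 1 ≤ i k := by
        intro k
        have := hi.monotone (Fin.zero_le k); omega
      rw [det_decomp _ _ _ hi1]
      refine Finset.sum_pos' (fun r _ => term_nonneg (p+1) i j hi hj hi1 r)
        ⟨(fun l => decide (j l = i l)), Finset.mem_univ _, ?_⟩
      set r0 : Fin (p+1) → Bool := fun l => decide (j l = i l) with hr0
      have hex' : ∀ l, r0 l = true → j l ≠ 0 := by
        intro l hl
        have : j l = i l := of_decide_eq_true hl
        have := hi1 l; omega
      rw [term_eq (p+1) i j r0 hex']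
      have hsm : StrictMono (fun l => j l - (if r0 l then 1 else 0)) := by
        intro a b hab
        have h1 := hj hab
        have h2 := hi hab
        have h3 := hle a
        have h4 := hle b
        have h5 := hi1 a
        show j a - (if r0 a then 1 else 0) < j b - (if r0 b then 1 else 0)
        simp only [hr0, decide_eq_true_eq]
        split_ifs <;> omega
      have hi' : StrictMono (fun k : Fin (p+1) => i k - 1) := by
        intro a b hab
        have := hi hab; have := hi1 a
        simp only; omega
      have hle' : ∀ l, j l - (if r0 l then 1 else 0) ≤ i l - 1 := by
        intro l
        have := hle l; have := hi1 l
        simp only [hr0, decide_eq_true_eq]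
        split_ifs with hl <;> omega
      have hsum := sum_pred (p+1) i hi1
      exact IH ((∑ k, (i k - 1)) + (p+1)) (by omega) (p+1) _ _ le_rfl hi' hsm hle'

theorem binomial_submatrix_det_pos
    (p : ℕ) (i j : Fin p → ℕ)
    (hi : StrictMono i) (hj : StrictMono j)
    (hle : ∀ k, j k ≤ i k) :
    0 < (Matrix.of fun k l : Fin p => ((i k).choose (j l) : ℝ)).det := by
  exact binom_det_pos ((∑ k, i k) + p) p i j le_rfl hi hj hle
end

section
/- Let p = Σ_{k=0}^{n} a_k(x,y) z^k be a homogeneous polynomial of degree n ≥ 1 with n even, and set r = n/2. Then p is odd in z (p(x,y,−z) = −p(x,y,z)) if and only if K_n(p) = 0, where K_n = Σ_{k=0}^{r} μ_k^{(n)} z^k ∂_z^k and the μ_k^{(n)} are the unique rationals satisfying Σ_{k=0}^{r} (2i−1)!/(2i−1−k)! μ_k = 0 for i = 1,…,r (with the term interpreted as 0 when k > 2i−1) and Σ_{k=0}^{r} n!/(n−k)! μ_k = 1. -/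
open Polynomial Finset

/-- The operator `K_n = Σ_{k=0}^{r} μ_k z^k ∂_z^k`. -/
noncomputable def Kop (r : ℕ) (mu : ℕ → ℝ)
    (p : Polynomial (MvPolynomial (Fin 2) ℝ)) : Polynomial (MvPolynomial (Fin 2) ℝ) :=
  ∑ k ∈ Finset.range (r + 1), mu k • (Polynomial.X ^ k * Polynomial.derivative^[k] p)

/-- The linear system determining the coefficients `μ_k^{(n)}`:
`Σ_k B_{2i−1,k} μ_k = 0` for `i = 1,…,r` and `Σ_k B_{n,k} μ_k = 1`,
where `B_{ij} = i!/(i−j)!` for `i ≥ j` and `0` otherwise (descending factorial). -/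
def muSystem (n r : ℕ) (mu : ℕ → ℝ) : Prop :=
  (∀ i ∈ Finset.Icc 1 r,
      ∑ k ∈ Finset.range (r + 1), ((2 * i - 1).descFactorial k : ℝ) * mu k = 0) ∧
    ∑ k ∈ Finset.range (r + 1), (n.descFactorial k : ℝ) * mu k = 1

/-!
`Kop r μ` is an Euler operator: it sends `z^m` to `Q(m) z^m`, where `Q = Σ_k μ_k X(X-1)⋯(X-k+1)`
is its indicial polynomial. `muSystem (2r) r μ` says that `Q`, of degree at most `r`, vanishes at
the `r` odd numbers `1, 3, …, 2r-1` and equals `1` at `2r`; so these are all its roots, and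
`Q(m) ≠ 0` for every even `m`. Hence `Kop r μ p = 0` iff all even-degree coefficients of `p` in `z`
vanish, which is oddness in `z`.
-/

namespace Polynomial

theorem coeff_comp_neg_X {R : Type*} [CommRing R] (p : R[X]) (m : ℕ) :
    (p.comp (-X)).coeff m = (-1) ^ m * p.coeff m := by
  rw [← neg_one_mul (X : R[X]), ← C_1, ← C_neg, comp_C_mul_X_coeff, mul_comm]

theorem comp_neg_X_eq_neg_iff {R : Type*} [CommRing R] [NoZeroDivisors R] [CharZero R]
    (p : R[X]) : p.comp (-X) = -p ↔ ∀ m, Even m → p.coeff m = 0 := by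
  simp_rw [Polynomial.ext_iff, coeff_comp_neg_X, coeff_neg]
  refine forall_congr' fun m => ?_
  rcases Nat.even_or_odd m with hm | hm
  · rw [hm.neg_one_pow, one_mul, eq_neg_iff_add_eq_zero, add_self_eq_zero]
    exact ⟨fun h _ => h, fun h => h hm⟩
  · simp [hm.neg_one_pow, Nat.not_even_iff_odd.2 hm]

theorem eval_ne_zero_of_natDegree_le_card {R : Type*} [CommRing R] [IsDomain R] {p : R[X]}
    (hp : p ≠ 0) {s : Finset R} (hs : ∀ a ∈ s, p.eval a = 0) (hdeg : p.natDegree ≤ #s)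
    {x : R} (hx : x ∉ s) : p.eval x ≠ 0 := fun hx0 => by
  classical
  exact hp <| eq_zero_of_natDegree_lt_card_of_eval_eq_zero' p (insert x s)
    (by simpa [hx0] using hs) (by rw [card_insert_of_notMem hx]; omega)

end Polynomial

noncomputable def indicialPoly (r : ℕ) (mu : ℕ → ℝ) : ℝ[X] :=
  ∑ k ∈ range (r + 1), C (mu k) * descPochhammer ℝ k

theorem indicialPoly_eval_natCast (r : ℕ) (mu : ℕ → ℝ) (m : ℕ) :
    (indicialPoly r mu).eval (m : ℝ) = ∑ k ∈ range (r + 1), (m.descFactorial k : ℝ) * mu k := by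
  simp only [indicialPoly, eval_finsetSum, eval_mul, eval_C,
    descPochhammer_eval_eq_descFactorial, mul_comm]

theorem natDegree_indicialPoly_le (r : ℕ) (mu : ℕ → ℝ) : (indicialPoly r mu).natDegree ≤ r :=
  natDegree_sum_le_of_forall_le _ _ fun k hk =>
    (natDegree_C_mul_le _ _).trans <| by
      rw [descPochhammer_natDegree]; exact Nat.lt_succ_iff.1 (mem_range.1 hk)

theorem coeff_Kop (r : ℕ) (mu : ℕ → ℝ) (p : Polynomial (MvPolynomial (Fin 2) ℝ)) (m : ℕ) :
    (Kop r mu p).coeff m = (indicialPoly r mu).eval (m : ℝ) • p.coeff m := by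
  rw [Kop, finsetSum_coeff, indicialPoly_eval_natCast, Finset.sum_smul]
  refine sum_congr rfl fun k _ => ?_
  rw [coeff_smul, mul_comm (X ^ k), coeff_mul_X_pow']
  by_cases hk : k ≤ m
  · rw [if_pos hk, coeff_iterate_derivative, Nat.sub_add_cancel hk,
      ← Nat.cast_smul_eq_nsmul ℝ, smul_smul, mul_comm]
  · rw [if_neg hk, Nat.descFactorial_eq_zero_iff_lt.2 (Nat.lt_of_not_le hk), Nat.cast_zero,
      zero_mul, zero_smul, smul_zero]

theorem Kop_eq_zero_iff (r : ℕ) (mu : ℕ → ℝ) (p : Polynomial (MvPolynomial (Fin 2) ℝ)) :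
    Kop r mu p = 0 ↔ ∀ m : ℕ, (indicialPoly r mu).eval (m : ℝ) = 0 ∨ p.coeff m = 0 := by
  simp_rw [Polynomial.ext_iff, coeff_Kop, coeff_zero, smul_eq_zero]

section muSystem

variable {r : ℕ} {mu : ℕ → ℝ}

theorem indicialPoly_eval_odd_eq_zero (hmu : muSystem (2 * r) r mu) {i : ℕ} (hi : i ∈ Icc 1 r) :
    (indicialPoly r mu).eval ((2 * i - 1 : ℕ) : ℝ) = 0 := by
  rw [indicialPoly_eval_natCast]; exact hmu.1 i hi

theorem indicialPoly_eval_even_ne_zero (hmu : muSystem (2 * r) r mu) (j : ℕ) :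
    (indicialPoly r mu).eval ((2 * j : ℕ) : ℝ) ≠ 0 := by
  have hinj : Set.InjOn (fun i : ℕ => ((2 * i - 1 : ℕ) : ℝ)) (Icc 1 r) := fun a ha b hb hab => by
    have := Nat.cast_injective (R := ℝ) hab
    simp only [coe_Icc, Set.mem_Icc] at ha hb
    omega
  have hne : indicialPoly r mu ≠ 0 := fun h => by
    have h2r := hmu.2
    rw [← indicialPoly_eval_natCast, h, eval_zero] at h2r
    exact zero_ne_one h2r
  refine eval_ne_zero_of_natDegree_le_card hne (s := (Icc 1 r).image fun i => ((2 * i - 1 : ℕ) : ℝ))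
    ?_ ?_ ?_
  · intro a ha
    obtain ⟨i, hi, rfl⟩ := mem_image.1 ha
    exact indicialPoly_eval_odd_eq_zero hmu hi
  · rw [card_image_of_injOn hinj, Nat.card_Icc, Nat.add_sub_cancel]
    exact natDegree_indicialPoly_le r mu
  · simp only [mem_image, mem_Icc, not_exists, not_and]
    intro i hi h
    have := Nat.cast_injective (R := ℝ) h
    omega

theorem indicialPoly_eval_eq_zero_iff (hmu : muSystem (2 * r) r mu) {m : ℕ} (hm : m ≤ 2 * r) :
    (indicialPoly r mu).eval (m : ℝ) = 0 ↔ Odd m := by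
  refine ⟨fun h => Nat.not_even_iff_odd.1 fun ⟨j, hj⟩ => ?_, fun ⟨i, hi⟩ => ?_⟩
  · exact indicialPoly_eval_even_ne_zero hmu j (by rwa [hj, ← two_mul] at h)
  · have := indicialPoly_eval_odd_eq_zero hmu (i := i + 1) (mem_Icc.2 ⟨by omega, by omega⟩)
    rwa [show 2 * (i + 1) - 1 = m by omega] at this

end muSystem

theorem z_odd_iff_Kop_eq_zero_of_even_degree_general
    (n : ℕ) (heven : Even n)
    (p : Polynomial (MvPolynomial (Fin 2) ℝ))
    (hdeg : p.natDegree ≤ n)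
    (mu : ℕ → ℝ) (hmu : muSystem n (n / 2) mu) :
    p.comp (-Polynomial.X) = -p ↔ Kop (n / 2) mu p = 0 := by
  obtain ⟨r, rfl⟩ := even_iff_two_dvd.1 heven
  rw [Nat.mul_div_cancel_left r two_pos] at hmu ⊢
  rw [comp_neg_X_eq_neg_iff, Kop_eq_zero_iff]
  refine forall_congr' fun m => ?_
  rcases le_or_gt m (2 * r) with hm | hm
  · rw [indicialPoly_eval_eq_zero_iff hmu hm, ← Nat.not_even_iff_odd]
    tauto
  · simp [coeff_eq_zero_of_natDegree_lt (hdeg.trans_lt hm)]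

theorem z_odd_iff_Kop_eq_zero_of_even_degree
    (n : ℕ) (hn : 1 ≤ n) (heven : Even n)
    (p : Polynomial (MvPolynomial (Fin 2) ℝ))
    (hdeg : p.natDegree ≤ n)
    (hhom : ∀ k ≤ n, (p.coeff k).IsHomogeneous (n - k))
    (mu : ℕ → ℝ) (hmu : muSystem n (n / 2) mu)
    (huniq : ∀ mu' : ℕ → ℝ, muSystem n (n / 2) mu' →
      ∀ k ∈ Finset.range (n / 2 + 1), mu' k = mu k) :
    p.comp (-Polynomial.X) = -p ↔ Kop (n / 2) mu p = 0 :=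
  z_odd_iff_Kop_eq_zero_of_even_degree_general n heven p hdeg mu hmu
end
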